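/- arXiv:2603.25824 — 3 statements merged into one kernel-verified Lean document; each statement's English description precedes it below -/
import Mathlib

section
/- Let p be a probability-distribution matrix with coupling polynomial f. Then the sum, over all tuples (x_1,x_2,x_3,y_1,y_2,y_3) ∈ {0,…,m}^6 and (u_1,u_2,u_3,v_1,v_2,v_3) ∈ {0,…,M−1}^6 satisfying x_1+x_2+x_3−y_1−y_2−y_3 = 0 and M ∣ (u_1+u_2+u_3−v_1−v_2−v_3), of the product ∏_{k=1}^{3} p_{x_k,u_k} p_{y_k,v_k}, equals Σ_{M∣b} [f(X,Y)^3 · f(X^{−1},Y^{−1})^3]_{0,b}. Equivalently, when the six pairs (x_k,u_k),(y_k,v_k) are drawn independently with law p, the probability P_6(p) that a cycle-6 candidate with six distinct base-matrix entries satisfies both the partitioning condition and the relocation condition equals Σ_{M∣b} [f^3(X,Y) f^3(X^{−1},Y^{−1})]_{0,b}. -/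
open scoped Classical

/-- The coupling polynomial with exponents scaled by `s`:
`f(X^s, Y^s) = ∑_{i=0}^{m} ∑_{j=0}^{M-1} p_{i,j} X^{s·i} Y^{s·j}`,
as an element of the group algebra of `ℤ × ℤ` over `ℝ` (two-variable real
Laurent polynomials). -/
noncomputable def couplingPoly (m M : ℕ) (p : Fin (m + 1) → Fin M → ℝ) (s : ℤ) :
    AddMonoidAlgebra ℝ (ℤ × ℤ) :=
  ∑ i : Fin (m + 1), ∑ j : Fin M,
    AddMonoidAlgebra.single (s * (i : ℤ), s * (j : ℤ)) (p i j)

/-!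
Expanding `f(X,Y)ⁿ · f(X⁻¹,Y⁻¹)ⁿ` multinomially writes it as a sum of monomials, one for each pair
of `n`-tuples of cells `(xₖ,uₖ)`, `(yₖ,vₖ)`, with coefficient `∏ₖ p_{xₖ,uₖ} p_{yₖ,vₖ}` and exponent
`(∑ₖ (xₖ - yₖ), ∑ₖ (uₖ - vₖ))`. Summing the coefficients at `(0, b)` over `M ∣ b` therefore picks
out exactly the tuples obeying both the partitioning and the relocation condition.
-/

theorem Finsupp.finsum_mem_single_apply {G R : Type*} [AddCommMonoid R] (a : G) (r : R)
    (T : Set G) : ∑ᶠ g ∈ T, single a r g = if a ∈ T then r else 0 := by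
  rw [finsum_mem_def, finsum_eq_single _ a fun g hg => by simp [Ne.symm hg]]
  simp [Set.indicator_apply]

namespace AddMonoidAlgebra

variable {R G ι : Type*}

theorem finsum_mem_coeff_sum_single [Semiring R] (s : Finset ι) (e : ι → G) (w : ι → R)
    (T : Set G) : ∑ᶠ g ∈ T, (∑ i ∈ s, single (e i) (w i)).coeff g = ∑ i ∈ s with e i ∈ T, w i := by
  have hfin (x : G →₀ R) : (T.indicator x).support.Finite :=
    x.hasFiniteSupport.subset <| by rw [Set.support_indicator]; exact Set.inter_subset_right
  rw [coeff_sum, finsum_mem_def, Finsupp.coe_finsetSum, Finset.indicator_sum]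
  simp only [Finset.sum_apply]
  rw [finsum_sum_comm _ _ fun i _ => hfin _, Finset.sum_filter]
  simp only [← finsum_mem_def, coeff_single, Finsupp.finsum_mem_single_apply]

variable [CommSemiring R] [Fintype ι]

theorem sum_single_pow [AddCommMonoid G] (e : ι → G) (w : ι → R) (n : ℕ) :
    (∑ i, single (e i) (w i)) ^ n =
      ∑ σ : Fin n → ι, single (∑ k, e (σ k)) (∏ k, w (σ k)) := by
  rw [← Fin.prod_const, Finset.prod_univ_sum, Fintype.piFinset_univ]
  exact Finset.sum_congr rfl fun σ _ => prod_single _ _ _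

theorem sum_single_pow_mul_sum_single_neg_pow [AddCommGroup G] (e : ι → G) (w : ι → R) (n : ℕ) :
    (∑ i, single (e i) (w i)) ^ n * (∑ i, single (-e i) (w i)) ^ n =
      ∑ στ : (Fin n → ι) × (Fin n → ι),
        single (∑ k, (e (στ.1 k) - e (στ.2 k))) (∏ k, w (στ.1 k) * w (στ.2 k)) := by
  simp only [sum_single_pow, Finset.sum_mul_sum, ← Finset.sum_product', Finset.univ_product_univ,
    single_mul_single, Finset.sum_neg_distrib, ← sub_eq_add_neg, Finset.sum_sub_distrib,
    Finset.prod_mul_distrib]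

end AddMonoidAlgebra

open AddMonoidAlgebra

section

variable (m M : ℕ) (p : Fin (m + 1) → Fin M → ℝ)

theorem couplingPoly_eq_sum_single (s : ℤ) :
    couplingPoly m M p s =
      ∑ q : Fin (m + 1) × Fin M, single (s • ((q.1 : ℤ), (q.2 : ℤ))) (p q.1 q.2) := by
  simp only [couplingPoly, Fintype.sum_prod_type, Prod.smul_mk, smul_eq_mul]

theorem finsum_dvd_coeff_couplingPoly_pow_mul_pow (n : ℕ) :
    ∑ᶠ b ∈ {b : ℤ | (M : ℤ) ∣ b},
        (couplingPoly m M p 1 ^ n * couplingPoly m M p (-1) ^ n).coeff (0, b) =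
      ∑ στ : (Fin n → Fin (m + 1) × Fin M) × (Fin n → Fin (m + 1) × Fin M) with
          ∑ k, (((στ.1 k).1 : ℤ) - (στ.2 k).1) = 0 ∧
            (M : ℤ) ∣ ∑ k, (((στ.1 k).2 : ℤ) - (στ.2 k).2),
        ∏ k, p (στ.1 k).1 (στ.1 k).2 * p (στ.2 k).1 (στ.2 k).2 := by
  rw [← finsum_mem_image (f := (couplingPoly m M p 1 ^ n * couplingPoly m M p (-1) ^ n).coeff)
    (Prod.mk_right_injective 0).injOn]
  simp only [couplingPoly_eq_sum_single, one_smul, neg_smul,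
    sum_single_pow_mul_sum_single_neg_pow]
  rw [finsum_mem_coeff_sum_single]
  refine Finset.sum_congr (Finset.filter_congr fun στ _ => ?_) fun _ _ => rfl
  simpa [Prod.ext_iff, Prod.fst_sum, Prod.snd_sum, eq_comm] using and_comm

end

theorem cycle6_activeness_probability_general (m M : ℕ)
    (p : Fin (m + 1) → Fin M → ℝ) :
    (∑ t ∈ Finset.univ.filter
        (fun t : (Fin 3 → Fin (m + 1)) × (Fin 3 → Fin (m + 1)) ×
                 (Fin 3 → Fin M) × (Fin 3 → Fin M) =>
          (∑ k : Fin 3, ((t.1 k : ℤ) - (t.2.1 k : ℤ))) = 0 ∧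
          (M : ℤ) ∣ ∑ k : Fin 3, ((t.2.2.1 k : ℤ) - (t.2.2.2 k : ℤ))),
        ∏ k : Fin 3, p (t.1 k) (t.2.2.1 k) * p (t.2.1 k) (t.2.2.2 k)) =
    ∑ᶠ b ∈ {b : ℤ | (M : ℤ) ∣ b},
      (couplingPoly m M p 1 ^ 3 * couplingPoly m M p (-1) ^ 3).coeff (0, b) := by
  rw [finsum_dvd_coeff_couplingPoly_pow_mul_pow]
  -- regroup `(x, y, u, v)` as the pair of cell tuples `((xₖ, uₖ))ₖ`, `((yₖ, vₖ))ₖ`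
  exact Finset.sum_equiv
    (((Equiv.prodAssoc _ _ _).symm.trans (Equiv.prodProdProdComm _ _ _ _)).trans
      ((Equiv.arrowProdEquivProdArrow _ _ _).symm.prodCongr
        (Equiv.arrowProdEquivProdArrow _ _ _).symm))
    (fun _ => by simp) (fun _ _ => by simp)

/-- For a probability-distribution matrix `p` with coupling
polynomial `f`, the sum over all tuples
`(x₁,x₂,x₃,y₁,y₂,y₃) ∈ {0,…,m}⁶`, `(u₁,u₂,u₃,v₁,v₂,v₃) ∈ {0,…,M−1}⁶`
with `x₁+x₂+x₃−y₁−y₂−y₃ = 0` and `M ∣ (u₁+u₂+u₃−v₁−v₂−v₃)`, of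
`∏ₖ p_{xₖ,uₖ} p_{yₖ,vₖ}`, equals
`Σ_{M∣b} [f(X,Y)³ · f(X⁻¹,Y⁻¹)³]_{0,b}`. -/
theorem cycle6_activeness_probability (m M : ℕ) (hM : 1 ≤ M)
    (p : Fin (m + 1) → Fin M → ℝ)
    (hp : ∀ i j, 0 ≤ p i j)
    (hsum : ∑ i : Fin (m + 1), ∑ j : Fin M, p i j = 1) :
    (∑ t ∈ Finset.univ.filter
        (fun t : (Fin 3 → Fin (m + 1)) × (Fin 3 → Fin (m + 1)) ×
                 (Fin 3 → Fin M) × (Fin 3 → Fin M) =>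
          (∑ k : Fin 3, ((t.1 k : ℤ) - (t.2.1 k : ℤ))) = 0 ∧
          (M : ℤ) ∣ ∑ k : Fin 3, ((t.2.2.1 k : ℤ) - (t.2.2.2 k : ℤ))),
        ∏ k : Fin 3, p (t.1 k) (t.2.2.1 k) * p (t.2.1 k) (t.2.2.2 k)) =
    ∑ᶠ b ∈ {b : ℤ | (M : ℤ) ∣ b},
      (couplingPoly m M p 1 ^ 3 * couplingPoly m M p (-1) ^ 3).coeff (0, b) :=
  cycle6_activeness_probability_general m M p
end

section
/- Let p be a probability-distribution matrix with coupling polynomial f. Consider six independent entry-pairs (x_0,u_0), (x_1,u_1), …, (x_5,u_5), each valued in {0,…,m}×{0,…,M−1}. Then the sum, over all such tuples satisfying 2x_0 − 2x_1 + x_2 + x_3 − x_4 − x_5 = 0 and M ∣ (2u_0 − 2u_1 + u_2 + u_3 − u_4 − u_5), of the product ∏_{e=0}^{5} p_{x_e,u_e}, equals Σ_{M∣b}[f(X^2,Y^2) · f(X^{−2},Y^{−2}) · f(X,Y)^2 · f(X^{−1},Y^{−1})^2]_{0,b}. In probabilistic terms this is the activeness probability of a cycle-8 candidate that traverses one entry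 twice with positive sign and one entry twice with negative sign (the w_2 pattern of the paper's cycle-8 expectation formula). -/
open scoped Classical

/-!
With the sign pattern `σ = (2, -2, 1, 1, -1, -1)` the polynomial on the right is
`∏ₑ f(X^{σₑ}, Y^{σₑ})`. Expanding this product over all tuples `t = ((x₀,u₀), …, (x₅,u₅))`
yields one monomial `X^{Σ σₑ xₑ} Y^{Σ σₑ uₑ}` with coefficient `∏ₑ p_{xₑ,uₑ}` per tuple, so
collecting the coefficients of `X⁰ Y^b` over `M ∣ b` picks out exactly the tuples with
`Σ σₑ xₑ = 0` and `M ∣ Σ σₑ uₑ`.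
-/

open AddMonoidAlgebra

namespace AddMonoidAlgebra

variable {R G H ι κ : Type*}

theorem prod_sum_single [CommSemiring R] [AddCommMonoid G] [Fintype ι] [DecidableEq ι]
    [Fintype κ] (f : ι → κ → G) (w : ι → κ → R) :
    ∏ e, ∑ q, single (f e q) (w e q) =
      ∑ t : ι → κ, single (∑ e, f e (t e)) (∏ e, w e (t e)) := by
  rw [Finset.prod_univ_sum, Fintype.piFinset_univ]
  simp only [prod_single]

theorem coeff_sum_single [Semiring R] [DecidableEq G] (s : Finset ι) (E : ι → G) (c : ι → R)
    (z : G) :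
    (∑ t ∈ s, single (E t) (c t)).coeff z = ∑ t ∈ s with E t = z, c t := by
  rw [Finset.sum_filter, coeff_sum, Finsupp.finsetSum_apply]
  simp only [coeff_single, Finsupp.single_apply]

theorem finsum_mem_coeff_sum_single_s4 [Semiring R] [DecidableEq G] [DecidableEq H]
    (s : Finset ι) (E : ι → G × H) (c : ι → R) (a : G) (S : Set H) [DecidablePred (· ∈ S)] :
    ∑ᶠ b ∈ S, (∑ t ∈ s, single (E t) (c t)).coeff (a, b) =
      ∑ t ∈ s with (E t).1 = a ∧ (E t).2 ∈ S, c t := by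
  rw [← finsum_sum_filter (fun t => (E t).2) {t ∈ s | (E t).1 = a ∧ (E t).2 ∈ S} c]
  refine finsum_congr fun b => ?_
  rw [finsum_eq_if, coeff_sum_single, Finset.filter_filter]
  split_ifs with hb
  · refine Finset.sum_congr (Finset.filter_congr fun t _ => ?_) fun _ _ => rfl
    constructor
    · intro h
      simp [h, hb]
    · rintro ⟨⟨h1, -⟩, h2⟩
      exact Prod.ext h1 h2
  · symm
    refine Finset.sum_eq_zero fun t ht => absurd ?_ hb
    simp only [Finset.mem_filter] at ht
    exact ht.2.2 ▸ ht.2.1.2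

end AddMonoidAlgebra

theorem couplingPoly_eq_sum (m M : ℕ) (p : Fin (m + 1) → Fin M → ℝ) (σ : ℤ) :
    couplingPoly m M p σ =
      ∑ q : Fin (m + 1) × Fin M, single (σ • ((q.1 : ℤ), (q.2 : ℤ))) (p q.1 q.2) := by
  rw [couplingPoly, Fintype.sum_prod_type]
  rfl

theorem prod_couplingPoly {ι : Type*} [Fintype ι] [DecidableEq ι] (m M : ℕ)
    (p : Fin (m + 1) → Fin M → ℝ) (σ : ι → ℤ) :
    ∏ e, couplingPoly m M p (σ e) =
      ∑ t : ι → Fin (m + 1) × Fin M,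
        single (∑ e, σ e • (((t e).1 : ℤ), ((t e).2 : ℤ))) (∏ e, p (t e).1 (t e).2) := by
  simp only [couplingPoly_eq_sum]
  exact prod_sum_single (fun e (q : Fin (m + 1) × Fin M) => σ e • ((q.1 : ℤ), (q.2 : ℤ)))
    fun _ q => p q.1 q.2

theorem couplingPoly_w2_eq_prod (m M : ℕ) (p : Fin (m + 1) → Fin M → ℝ) :
    couplingPoly m M p 2 * couplingPoly m M p (-2) *
        couplingPoly m M p 1 ^ 2 * couplingPoly m M p (-1) ^ 2 =
      ∏ e, couplingPoly m M p (![2, -2, 1, 1, -1, -1] e) := by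
  simp only [Fin.prod_univ_six, Matrix.cons_val]
  ring

theorem cycle8_pattern_w2_activeness_probability_general (m M : ℕ)
    (p : Fin (m + 1) → Fin M → ℝ) :
    (∑ t ∈ Finset.univ.filter
        (fun t : Fin 6 → Fin (m + 1) × Fin M =>
          2 * ((t 0).1 : ℤ) - 2 * ((t 1).1 : ℤ) + ((t 2).1 : ℤ) + ((t 3).1 : ℤ)
            - ((t 4).1 : ℤ) - ((t 5).1 : ℤ) = 0 ∧
          (M : ℤ) ∣ (2 * ((t 0).2 : ℤ) - 2 * ((t 1).2 : ℤ) + ((t 2).2 : ℤ)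
            + ((t 3).2 : ℤ) - ((t 4).2 : ℤ) - ((t 5).2 : ℤ))),
        ∏ e : Fin 6, p (t e).1 (t e).2) =
    ∑ᶠ b ∈ {b : ℤ | (M : ℤ) ∣ b},
      (couplingPoly m M p 2 * couplingPoly m M p (-2) *
        couplingPoly m M p 1 ^ 2 * couplingPoly m M p (-1) ^ 2).coeff (0, b) := by
  rw [couplingPoly_w2_eq_prod, prod_couplingPoly, finsum_mem_coeff_sum_single_s4]
  refine Finset.sum_congr (Finset.filter_congr fun t _ => ?_) fun _ _ => rfl
  simp only [Fin.sum_univ_six, Matrix.cons_val, Prod.smul_mk, smul_eq_mul, Prod.mk_add_mk,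
    Set.mem_ofPred_eq]
  ring_nf

/-- For six independent entry-pairs
`(x₀,u₀), …, (x₅,u₅)` each with law `p`, the sum over all tuples with
`2x₀ − 2x₁ + x₂ + x₃ − x₄ − x₅ = 0` and
`M ∣ (2u₀ − 2u₁ + u₂ + u₃ − u₄ − u₅)`, of `∏ₑ p_{xₑ,uₑ}`, equals
`Σ_{M∣b}[f(X²,Y²) · f(X⁻²,Y⁻²) · f(X,Y)² · f(X⁻¹,Y⁻¹)²]_{0,b}`
(the `w₂` cycle-8 pattern: one entry traversed twice with positive sign and
one entry traversed twice with negative sign). -/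
theorem cycle8_pattern_w2_activeness_probability (m M : ℕ) (hM : 1 ≤ M)
    (p : Fin (m + 1) → Fin M → ℝ)
    (hp : ∀ i j, 0 ≤ p i j)
    (hsum : ∑ i : Fin (m + 1), ∑ j : Fin M, p i j = 1) :
    (∑ t ∈ Finset.univ.filter
        (fun t : Fin 6 → Fin (m + 1) × Fin M =>
          2 * ((t 0).1 : ℤ) - 2 * ((t 1).1 : ℤ) + ((t 2).1 : ℤ) + ((t 3).1 : ℤ)
            - ((t 4).1 : ℤ) - ((t 5).1 : ℤ) = 0 ∧
          (M : ℤ) ∣ (2 * ((t 0).2 : ℤ) - 2 * ((t 1).2 : ℤ) + ((t 2).2 : ℤ)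
            + ((t 3).2 : ℤ) - ((t 4).2 : ℤ) - ((t 5).2 : ℤ))),
        ∏ e : Fin 6, p (t e).1 (t e).2) =
    ∑ᶠ b ∈ {b : ℤ | (M : ℤ) ∣ b},
      (couplingPoly m M p 2 * couplingPoly m M p (-2) *
        couplingPoly m M p 1 ^ 2 * couplingPoly m M p (-1) ^ 2).coeff (0, b) :=
  cycle8_pattern_w2_activeness_probability_general m M p
end

section
/- Let p be a probability-distribution matrix and let k, l ≥ 2 be integers. Consider 2k + 2l − 2 independent entry-pairs valued in {0,…,m} × {0,…,M−1}, indexed by a disjoint union {e⁺, e⁻} ⊔ A⁺ ⊔ A⁻ ⊔ B⁺ ⊔ B⁻ with |A⁺| = |A⁻| = k−1 and |B⁺| = |B⁻| = l−1, each pair (x_e, u_e) drawn with law p. Then the probability that simultaneously (i) x_{e⁺} − x_{e⁻} + Σ_{e∈A⁺} x_e − Σ_{e∈A⁻} x_e = 0, (ii) M ∣ ( u_{e⁺} − u_{e⁻} + Σ_{e∈A⁺} u_e − Σ_{e∈A⁻} u_e ), (iii) x_{e⁺} − x_{e⁻} + Σ_{e∈B⁺} x_e − Σ_{e∈B⁻}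 x_e = 0, and (iv) M ∣ ( u_{e⁺} − u_{e⁻} + Σ_{e∈B⁺} u_e − Σ_{e∈B⁻} u_e ) equals P^𝒟_{2k,2l}(p) := Σ_{M∣b_1, M∣b_2} [ f(X_1X_2, Y_1Y_2) · f(X_1^{−1}X_2^{−1}, Y_1^{−1}Y_2^{−1}) · f(X_1,Y_1)^{k−1} · f(X_1^{−1},Y_1^{−1})^{k−1} · f(X_2,Y_2)^{l−1} · f(X_2^{−1},Y_2^{−1})^{l−1} ]_{0,0,b_1,b_2}. This is the probability that a dominant object pattern of the 2k-2l two-cycle-concatenation configuration remains active after random partitioning and relocations, and all dominant object pattern classes of this configuration share this characteristic polynomial. -/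
/-!
Give each edge the coupling polynomial whose exponents are its signed incidences with the two
cycles. Expanding the product of these `2k + 2l − 2` polynomials over all assignments `ω` of
entry-pairs to edges gives `Σ_ω p(ω) X₁^{a₁} X₂^{a₂} Y₁^{b₁} Y₂^{b₂}`, where `a₁, a₂` are the
alternating sums of the `x`-values along the two cycles and `b₁, b₂` those of the `u`-values.
So the coefficients at `(0, 0, b₁, b₂)` with `M ∣ b₁, b₂` collect exactly the weights of the
assignments satisfying (i)–(iv).
-/

open scoped Classical

/-- A monomial-substituted coupling polynomial in the four-variable Laurent
polynomial ring (the group algebra over `ℝ` of `ℤ⁴`):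
`couplingPoly4 p s₁ s₂ t₁ t₂ = Σ_{i,j} p_{i,j} X₁^{s₁·i} X₂^{s₂·i} Y₁^{t₁·j} Y₂^{t₂·j}`.
E.g. `couplingPoly4 p 1 1 1 1 = f(X₁X₂, Y₁Y₂)`,
`couplingPoly4 p 1 0 1 0 = f(X₁,Y₁)`,
`couplingPoly4 p (-1) 0 (-1) 0 = f(X₁⁻¹,Y₁⁻¹)`, etc. -/
noncomputable def couplingPoly4 (m M : ℕ) (p : Fin (m + 1) → Fin M → ℝ)
    (s₁ s₂ t₁ t₂ : ℤ) : AddMonoidAlgebra ℝ (ℤ × ℤ × ℤ × ℤ) :=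
  ∑ i : Fin (m + 1), ∑ j : Fin M,
    AddMonoidAlgebra.single
      (s₁ * (i : ℤ), s₂ * (i : ℤ), t₁ * (j : ℤ), t₂ * (j : ℤ)) (p i j)

open Finset

theorem finsum_mem_coeff_sum_single {ι G R : Type*} [Fintype ι] [Semiring R]
    (S : ι → G) (W : ι → R) (t : Set G) :
    ∑ᶠ x ∈ t, (∑ ω, AddMonoidAlgebra.single (S ω) (W ω)).coeff x = ∑ ω with S ω ∈ t, W ω := by
  have hfin : ∀ ω ∈ (univ : Finset ι),
      Function.HasFiniteSupport (t.indicator (Finsupp.single (S ω) (W ω))) := fun ω _ =>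
    (Finsupp.hasFiniteSupport _).subset (Set.support_indicator.trans_subset Set.inter_subset_right)
  simp only [finsum_mem_def, AddMonoidAlgebra.coeff_sum, AddMonoidAlgebra.coeff_single,
    Finsupp.coe_finsetSum, indicator_sum]
  simp only [Finset.sum_apply]
  rw [← sum_finsum_comm _ _ hfin, sum_filter]
  refine sum_congr rfl fun ω _ => ?_
  rw [finsum_eq_single _ (S ω) fun x hx => by simp [Set.indicator_apply, Finsupp.single_eq_of_ne hx]]
  simp [Set.indicator_apply]

theorem prod_couplingPoly4 {ι : Type*} [Fintype ι] [DecidableEq ι] (m M : ℕ)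
    (p : Fin (m + 1) → Fin M → ℝ) (s₁ s₂ t₁ t₂ : ι → ℤ) :
    ∏ e, couplingPoly4 m M p (s₁ e) (s₂ e) (t₁ e) (t₂ e) =
      ∑ ω : ι → Fin (m + 1) × Fin M, AddMonoidAlgebra.single
        (∑ e, s₁ e * (ω e).1, ∑ e, s₂ e * (ω e).1, ∑ e, t₁ e * (ω e).2, ∑ e, t₂ e * (ω e).2)
        (∏ e, p (ω e).1 (ω e).2) := by
  simp only [couplingPoly4, ← Fintype.sum_prod_type']
  rw [Fintype.prod_sum]
  refine sum_congr rfl fun ω _ => ?_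
  rw [AddMonoidAlgebra.prod_single]
  congr 1
  simp only [Prod.ext_iff, Prod.fst_sum, Prod.snd_sum, and_self]

section TwoCycleConcatenation

variable {A B : Type*} [Fintype A] [Fintype B]

/-- The edge set `{e⁺, e⁻} ⊔ A⁺ ⊔ A⁻ ⊔ B⁺ ⊔ B⁻` is `Fin 2 ⊕ ((A ⊕ A) ⊕ (B ⊕ B))`; these are the
signed incidences of the edges with the `2k`-cycle (`e⁺, e⁻, A⁺, A⁻`) and the `2l`-cycle
(`e⁺, e⁻, B⁺, B⁻`). -/
def firstCycleSign : Fin 2 ⊕ ((A ⊕ A) ⊕ (B ⊕ B)) → ℤ :=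
  Sum.elim ![1, -1] (Sum.elim (Sum.elim 1 (-1)) 0)

def secondCycleSign : Fin 2 ⊕ ((A ⊕ A) ⊕ (B ⊕ B)) → ℤ :=
  Sum.elim ![1, -1] (Sum.elim 0 (Sum.elim 1 (-1)))

theorem sum_firstCycleSign_mul (x : Fin 2 ⊕ ((A ⊕ A) ⊕ (B ⊕ B)) → ℤ) :
    ∑ e, firstCycleSign e * x e =
      x (.inl 0) - x (.inl 1) + ∑ a, x (.inr (.inl (.inl a))) - ∑ a, x (.inr (.inl (.inr a))) := by
  simp [firstCycleSign, Fintype.sum_sum_type, Fin.sum_univ_two, sub_eq_add_neg, add_assoc]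

theorem sum_secondCycleSign_mul (x : Fin 2 ⊕ ((A ⊕ A) ⊕ (B ⊕ B)) → ℤ) :
    ∑ e, secondCycleSign e * x e =
      x (.inl 0) - x (.inl 1) + ∑ b, x (.inr (.inr (.inl b))) - ∑ b, x (.inr (.inr (.inr b))) := by
  simp [secondCycleSign, Fintype.sum_sum_type, Fin.sum_univ_two, sub_eq_add_neg, add_assoc]

theorem prod_couplingPoly4_cycleSign (m M : ℕ) (p : Fin (m + 1) → Fin M → ℝ) :
    ∏ e : Fin 2 ⊕ ((A ⊕ A) ⊕ (B ⊕ B)), couplingPoly4 m M p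
        (firstCycleSign e) (secondCycleSign e) (firstCycleSign e) (secondCycleSign e) =
      couplingPoly4 m M p 1 1 1 1 * couplingPoly4 m M p (-1) (-1) (-1) (-1) *
        couplingPoly4 m M p 1 0 1 0 ^ Fintype.card A *
        couplingPoly4 m M p (-1) 0 (-1) 0 ^ Fintype.card A *
        couplingPoly4 m M p 0 1 0 1 ^ Fintype.card B *
        couplingPoly4 m M p 0 (-1) 0 (-1) ^ Fintype.card B := by
  simp [Fintype.prod_sum_type, Fin.prod_univ_two, firstCycleSign, secondCycleSign, mul_assoc]

end TwoCycleConcatenation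

theorem dominant_pattern_activeness_probability_general (m M : ℕ)
    (k l : ℕ)
    (p : Fin (m + 1) → Fin M → ℝ) :
    (∑ ω ∈ Finset.univ.filter
        (fun ω : Fin 2 ⊕ ((Fin (k - 1) ⊕ Fin (k - 1)) ⊕ (Fin (l - 1) ⊕ Fin (l - 1))) →
              Fin (m + 1) × Fin M =>
          ((ω (Sum.inl 0)).1 : ℤ) - ((ω (Sum.inl 1)).1 : ℤ)
            + (∑ a : Fin (k - 1), ((ω (Sum.inr (Sum.inl (Sum.inl a)))).1 : ℤ))
            - (∑ a : Fin (k - 1), ((ω (Sum.inr (Sum.inl (Sum.inr a)))).1 : ℤ)) = 0 ∧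
          (M : ℤ) ∣ (((ω (Sum.inl 0)).2 : ℤ) - ((ω (Sum.inl 1)).2 : ℤ)
            + (∑ a : Fin (k - 1), ((ω (Sum.inr (Sum.inl (Sum.inl a)))).2 : ℤ))
            - (∑ a : Fin (k - 1), ((ω (Sum.inr (Sum.inl (Sum.inr a)))).2 : ℤ))) ∧
          ((ω (Sum.inl 0)).1 : ℤ) - ((ω (Sum.inl 1)).1 : ℤ)
            + (∑ a : Fin (l - 1), ((ω (Sum.inr (Sum.inr (Sum.inl a)))).1 : ℤ))
            - (∑ a : Fin (l - 1), ((ω (Sum.inr (Sum.inr (Sum.inr a)))).1 : ℤ)) = 0 ∧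
          (M : ℤ) ∣ (((ω (Sum.inl 0)).2 : ℤ) - ((ω (Sum.inl 1)).2 : ℤ)
            + (∑ a : Fin (l - 1), ((ω (Sum.inr (Sum.inr (Sum.inl a)))).2 : ℤ))
            - (∑ a : Fin (l - 1), ((ω (Sum.inr (Sum.inr (Sum.inr a)))).2 : ℤ)))),
        ∏ e, p (ω e).1 (ω e).2) =
    ∑ᶠ b ∈ {b : ℤ × ℤ | (M : ℤ) ∣ b.1 ∧ (M : ℤ) ∣ b.2},
      (couplingPoly4 m M p 1 1 1 1 * couplingPoly4 m M p (-1) (-1) (-1) (-1) *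
        couplingPoly4 m M p 1 0 1 0 ^ (k - 1) *
        couplingPoly4 m M p (-1) 0 (-1) 0 ^ (k - 1) *
        couplingPoly4 m M p 0 1 0 1 ^ (l - 1) *
        couplingPoly4 m M p 0 (-1) 0 (-1) ^ (l - 1)).coeff (0, 0, b.1, b.2) := by

  have hprod := prod_couplingPoly4_cycleSign (A := Fin (k - 1)) (B := Fin (l - 1)) m M p
  rw [Fintype.card_fin, Fintype.card_fin] at hprod
  have hinj : Set.InjOn (fun b : ℤ × ℤ => ((0 : ℤ), (0 : ℤ), b.1, b.2))
      {b | (M : ℤ) ∣ b.1 ∧ (M : ℤ) ∣ b.2} := fun _ _ _ _ h => by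
    simp_all [Prod.ext_iff]
  rw [← hprod, prod_couplingPoly4, ← finsum_mem_image hinj, finsum_mem_coeff_sum_single]
  refine sum_congr (filter_congr fun ω _ => ?_) fun _ _ => rfl
  simp only [Set.mem_image, Set.mem_ofPred_eq, Prod.ext_iff, sum_firstCycleSign_mul,
    sum_secondCycleSign_mul]
  constructor
  · rintro ⟨hx₁, hu₁, hx₂, hu₂⟩
    exact ⟨(_, _), ⟨hu₁, hu₂⟩, hx₁.symm, hx₂.symm, rfl, rfl⟩
  · rintro ⟨b, ⟨hb₁, hb₂⟩, hx₁, hx₂, hu₁, hu₂⟩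
    exact ⟨hx₁.symm, hu₁ ▸ hb₁, hx₂.symm, hu₂ ▸ hb₂⟩

/-- Consider `2k + 2l − 2` independent entry-pairs indexed
by `{e⁺, e⁻} ⊔ A⁺ ⊔ A⁻ ⊔ B⁺ ⊔ B⁻` with `|A⁺| = |A⁻| = k−1`,
`|B⁺| = |B⁻| = l−1`, each drawn with law `p`.  The probability that the two
fundamental-cycle activeness conditions (partitioning and relocation, for
both the `2k`-cycle using `e⁺,e⁻,A⁺,A⁻` and the `2l`-cycle using
`e⁺,e⁻,B⁺,B⁻`) hold simultaneously equals
`P^𝒟_{2k,2l}(p) = Σ_{M∣b₁,M∣b₂}[ f(X₁X₂,Y₁Y₂) f(X₁⁻¹X₂⁻¹,Y₁⁻¹Y₂⁻¹)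
  f(X₁,Y₁)^{k−1} f(X₁⁻¹,Y₁⁻¹)^{k−1} f(X₂,Y₂)^{l−1} f(X₂⁻¹,Y₂⁻¹)^{l−1} ]_{0,0,b₁,b₂}`,
the activeness probability of a dominant object pattern of the
`2k`-`2l` two-cycle-concatenation configuration. -/
theorem dominant_pattern_activeness_probability (m M : ℕ) (hM : 1 ≤ M)
    (k l : ℕ) (hk : 2 ≤ k) (hl : 2 ≤ l)
    (p : Fin (m + 1) → Fin M → ℝ)
    (hp : ∀ i j, 0 ≤ p i j)
    (hsum : ∑ i : Fin (m + 1), ∑ j : Fin M, p i j = 1) :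
    (∑ ω ∈ Finset.univ.filter
        (fun ω : Fin 2 ⊕ ((Fin (k - 1) ⊕ Fin (k - 1)) ⊕ (Fin (l - 1) ⊕ Fin (l - 1))) →
              Fin (m + 1) × Fin M =>
          ((ω (Sum.inl 0)).1 : ℤ) - ((ω (Sum.inl 1)).1 : ℤ)
            + (∑ a : Fin (k - 1), ((ω (Sum.inr (Sum.inl (Sum.inl a)))).1 : ℤ))
            - (∑ a : Fin (k - 1), ((ω (Sum.inr (Sum.inl (Sum.inr a)))).1 : ℤ)) = 0 ∧
          (M : ℤ) ∣ (((ω (Sum.inl 0)).2 : ℤ) - ((ω (Sum.inl 1)).2 : ℤ)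
            + (∑ a : Fin (k - 1), ((ω (Sum.inr (Sum.inl (Sum.inl a)))).2 : ℤ))
            - (∑ a : Fin (k - 1), ((ω (Sum.inr (Sum.inl (Sum.inr a)))).2 : ℤ))) ∧
          ((ω (Sum.inl 0)).1 : ℤ) - ((ω (Sum.inl 1)).1 : ℤ)
            + (∑ a : Fin (l - 1), ((ω (Sum.inr (Sum.inr (Sum.inl a)))).1 : ℤ))
            - (∑ a : Fin (l - 1), ((ω (Sum.inr (Sum.inr (Sum.inr a)))).1 : ℤ)) = 0 ∧
          (M : ℤ) ∣ (((ω (Sum.inl 0)).2 : ℤ) - ((ω (Sum.inl 1)).2 : ℤ)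
            + (∑ a : Fin (l - 1), ((ω (Sum.inr (Sum.inr (Sum.inl a)))).2 : ℤ))
            - (∑ a : Fin (l - 1), ((ω (Sum.inr (Sum.inr (Sum.inr a)))).2 : ℤ)))),
        ∏ e, p (ω e).1 (ω e).2) =
    ∑ᶠ b ∈ {b : ℤ × ℤ | (M : ℤ) ∣ b.1 ∧ (M : ℤ) ∣ b.2},
      (couplingPoly4 m M p 1 1 1 1 * couplingPoly4 m M p (-1) (-1) (-1) (-1) *
        couplingPoly4 m M p 1 0 1 0 ^ (k - 1) *
        couplingPoly4 m M p (-1) 0 (-1) 0 ^ (k - 1) *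
        couplingPoly4 m M p 0 1 0 1 ^ (l - 1) *
        couplingPoly4 m M p 0 (-1) 0 (-1) ^ (l - 1)).coeff (0, 0, b.1, b.2) :=
  dominant_pattern_activeness_probability_general m M k l p
end
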